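/- Suppose Assumption 1 (full rank) holds. Then Assumption 2 (no separation) holds if and only if the minimum of the quadratic program min_{u,c} u'u subject to u = ∑_{i=1}^n ∑_{d∈B_i} c_{i,d} v_{i,d} and c_{i,d} ≥ 1 for all i and all d ∈ B_i equals zero; equivalently, if and only if there exist real coefficients c_{i,d} ≥ 1 (one for each pair (i,d) with d ∈ B_i) such that ∑_{i=1}^n ∑_{d∈B_i} c_{i,d} v_{i,d} = 0. (Theorem 2 of the paper.) -/

import Mathlib

open scoped BigOperators RealInnerProductSpace

noncomputable section

/-- Real value of a binary indicator. -/
def bval (b : Bool) : ℝ := if b then 1 else 0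

/-- The alternative set `B_i = {d ∈ {0,1}^T : ∑_t d_t = ∑_t Y_{it}}`. -/
def altSet (T : ℕ) (Yi : Fin T → Bool) : Finset (Fin T → Bool) :=
  Finset.univ.filter fun d => (∑ t, (d t).toNat) = ∑ t, (Yi t).toNat

/-- The conditional log-likelihood `log L(β)`. -/
def logL {n T p : ℕ} (X : Fin n → Fin T → EuclideanSpace ℝ (Fin p))
    (Y : Fin n → Fin T → Bool) (β : EuclideanSpace ℝ (Fin p)) : ℝ :=
  ∑ i, ((∑ t, bval (Y i t) * ⟪X i t, β⟫) -
    Real.log (∑ d ∈ altSet T (Y i), Real.exp (∑ t, bval (d t) * ⟪X i t, β⟫)))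

/-- The conditional-logit (softmax) weights `w_i(d; β)`. -/
def cweight {n T p : ℕ} (X : Fin n → Fin T → EuclideanSpace ℝ (Fin p))
    (Y : Fin n → Fin T → Bool) (i : Fin n) (d : Fin T → Bool)
    (β : EuclideanSpace ℝ (Fin p)) : ℝ :=
  Real.exp (∑ t, bval (d t) * ⟪X i t, β⟫) /
    ∑ f ∈ altSet T (Y i), Real.exp (∑ t, bval (f t) * ⟪X i t, β⟫)

/-- Row index set of the matrix in Assumption 1: pairs `(i, d)` with `d ∈ B_i`. -/
abbrev RowIdx (n T : ℕ) (Y : Fin n → Fin T → Bool) :=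
  (i : Fin n) × {d : Fin T → Bool // d ∈ altSet T (Y i)}

/-- The matrix of Assumption 1, evaluated at `β`. -/
def rowMat {n T p : ℕ} (X : Fin n → Fin T → EuclideanSpace ℝ (Fin p))
    (Y : Fin n → Fin T → Bool) (β : EuclideanSpace ℝ (Fin p)) :
    Matrix (RowIdx n T Y) (Fin p) ℝ :=
  fun r k =>
    (∑ t, bval (r.2.1 t) * X r.1 t k) -
      ∑ e ∈ altSet T (Y r.1),
        cweight X Y r.1 e β * ∑ t, bval (e t) * X r.1 t k

/-- Assumption 1 (full rank). -/
def Assumption1 {n T p : ℕ} (X : Fin n → Fin T → EuclideanSpace ℝ (Fin p))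
    (Y : Fin n → Fin T → Bool) : Prop :=
  ∀ β : EuclideanSpace ℝ (Fin p), (rowMat X Y β).rank = p

/-- Assumption 2 (no separation). -/
def Assumption2 {n T p : ℕ} (X : Fin n → Fin T → EuclideanSpace ℝ (Fin p))
    (Y : Fin n → Fin T → Bool) : Prop :=
  ¬ ∃ βstar : EuclideanSpace ℝ (Fin p), βstar ≠ 0 ∧
      ∀ i, ∀ d ∈ altSet T (Y i),
        0 ≤ ∑ t, (bval (d t) - bval (Y i t)) * ⟪X i t, βstar⟫

/-- The vectors `v_{i,d} = ∑_t (d_t − Y_{it}) X_{it}`. -/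
def vvec {n T p : ℕ} (X : Fin n → Fin T → EuclideanSpace ℝ (Fin p))
    (Y : Fin n → Fin T → Bool) (i : Fin n) (d : Fin T → Bool) :
    EuclideanSpace ℝ (Fin p) :=
  ∑ t, (bval (d t) - bval (Y i t)) • X i t

/-! Under full rank, `⟪v_{i,d}, β⟫ = 0` for all `(i, d)` forces `β = 0`, so no separation says that
every `β ≠ 0` has some `⟪v_{i,d}, β⟫ < 0`. Then `β ↦ ∑ exp (-⟪v_{i,d}, β⟫)` grows at least linearly
in `‖β‖` and attains its minimum; its gradient vanishes there, which is a strictly positive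
combination `∑ exp (-⟪v_{i,d}, β₀⟫) • v_{i,d} = 0`, rescaled to coefficients `≥ 1`. Conversely,
such a combination forces every nonnegative `⟪v_{i,d}, β⟫` to vanish. Without it, a separating `β`
bounds `‖∑ c_{i,d} • v_{i,d}‖` below by `⟪v_j, β⟫ / ‖β‖ > 0`, so the quadratic program has
positive value. -/

section Alternative

variable {E : Type*} [NormedAddCommGroup E] [InnerProductSpace ℝ E] {ι : Type*} [Fintype ι]
  (v : ι → E)

theorem exists_mul_norm_le_sum_max_neg_inner [FiniteDimensional ℝ E]
    (h : ∀ β ≠ 0, ∃ j, ⟪v j, β⟫ < 0) :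
    ∃ δ > 0, ∀ β, δ * ‖β‖ ≤ ∑ j, max (-⟪v j, β⟫) 0 := by
  set ψ : E → ℝ := fun β => ∑ j, max (-⟪v j, β⟫) 0
  rcases subsingleton_or_nontrivial E with _ | _
  · exact ⟨1, one_pos, fun β => by simp [Subsingleton.elim β 0]⟩
  obtain ⟨u, hu, hu_min⟩ := (isCompact_sphere (0 : E) 1).exists_isMinOn
    (NormedSpace.sphere_nonempty.mpr zero_le_one) (by fun_prop : Continuous ψ).continuousOn
  obtain ⟨j, hj⟩ := h u (ne_zero_of_mem_unit_sphere ⟨u, hu⟩)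
  refine ⟨ψ u, Finset.sum_pos' (fun j _ => le_max_right _ _)
    ⟨j, Finset.mem_univ j, lt_max_of_lt_left (neg_pos.mpr hj)⟩, fun β => ?_⟩
  rcases eq_or_ne β 0 with rfl | hβ
  · simp
  have hβn : 0 < ‖β‖ := norm_pos_iff.mpr hβ
  have hψ_smul : ψ β = ‖β‖ * ψ (‖β‖⁻¹ • β) := by
    simp only [ψ, Finset.mul_sum, inner_smul_right, mul_max_of_nonneg _ _ hβn.le,
      ← neg_mul_eq_mul_neg, mul_zero, mul_inv_cancel_left₀ hβn.ne']
  have hβ_sphere : ‖β‖⁻¹ • β ∈ Metric.sphere (0 : E) 1 := by simp [norm_smul, hβn.ne']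
  change ψ u * ‖β‖ ≤ ψ β
  rw [hψ_smul, mul_comm]
  exact mul_le_mul_of_nonneg_left (hu_min hβ_sphere) hβn.le

theorem exists_forall_sum_exp_neg_inner_le [FiniteDimensional ℝ E]
    (h : ∀ β ≠ 0, ∃ j, ⟪v j, β⟫ < 0) :
    ∃ β₀, ∀ β, ∑ j, Real.exp (-⟪v j, β₀⟫) ≤ ∑ j, Real.exp (-⟪v j, β⟫) := by
  obtain ⟨δ, hδ, hψ⟩ := exists_mul_norm_le_sum_max_neg_inner v h
  refine Continuous.exists_forall_le' (by fun_prop) 0 ?_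
  filter_upwards [tendsto_norm_cocompact_atTop.eventually_ge_atTop (Fintype.card ι / δ)]
    with β hβ
  calc ∑ j, Real.exp (-⟪v j, (0 : E)⟫) = Fintype.card ι := by simp
    _ ≤ δ * ‖β‖ := by rwa [div_le_iff₀' hδ] at hβ
    _ ≤ ∑ j, max (-⟪v j, β⟫) 0 := hψ β
    _ ≤ ∑ j, Real.exp (-⟪v j, β⟫) := Finset.sum_le_sum fun j _ =>
        max_le ((le_add_of_nonneg_right zero_le_one).trans (Real.add_one_le_exp _))
          (Real.exp_nonneg _)

theorem sum_exp_neg_inner_smul_eq_zero_of_forall_le {β₀ : E}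
    (hmin : ∀ β, ∑ j, Real.exp (-⟪v j, β₀⟫) ≤ ∑ j, Real.exp (-⟪v j, β⟫)) :
    ∑ j, Real.exp (-⟪v j, β₀⟫) • v j = 0 := by
  set w := ∑ j, Real.exp (-⟪v j, β₀⟫) • v j
  set g : ℝ → ℝ := fun t => ∑ j, Real.exp (-(⟪v j, β₀⟫ + t * ⟪v j, w⟫))
  have hg_min : IsLocalMin g 0 := Filter.Eventually.of_forall fun t => by
    simpa [g, inner_add_right, inner_smul_right] using hmin (β₀ + t • w)
  have hg_deriv : HasDerivAt g (∑ j, Real.exp (-⟪v j, β₀⟫) * -⟪v j, w⟫) 0 := by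
    refine HasDerivAt.fun_sum fun j _ => ?_
    simpa using ((((hasDerivAt_id (0 : ℝ)).mul_const ⟪v j, w⟫).const_add ⟪v j, β₀⟫).neg).exp
  have hw : ⟪w, w⟫ = 0 := by
    have := hg_min.hasDerivAt_eq_zero hg_deriv
    simp only [mul_neg, Finset.sum_neg_distrib, neg_eq_zero] at this
    rw [← this]
    simp only [w, sum_inner, real_inner_smul_left]
  exact inner_self_eq_zero.mp hw

theorem exists_pos_sum_smul_eq_zero_of_forall_exists_inner_neg [FiniteDimensional ℝ E]
    (h : ∀ β ≠ 0, ∃ j, ⟪v j, β⟫ < 0) :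
    ∃ c : ι → ℝ, (∀ j, 0 < c j) ∧ ∑ j, c j • v j = 0 := by
  obtain ⟨β₀, hβ₀⟩ := exists_forall_sum_exp_neg_inner_le v h
  exact ⟨_, fun j => Real.exp_pos _, sum_exp_neg_inner_smul_eq_zero_of_forall_le v hβ₀⟩

theorem inner_le_inner_sum_smul {c : ι → ℝ} (hc : ∀ j, 1 ≤ c j) {β : E}
    (hβ : ∀ j, 0 ≤ ⟪v j, β⟫) (j₀ : ι) : ⟪v j₀, β⟫ ≤ ⟪∑ j, c j • v j, β⟫ :=
  calc ⟪v j₀, β⟫ ≤ c j₀ * ⟪v j₀, β⟫ := le_mul_of_one_le_left (hβ j₀) (hc j₀)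
    _ ≤ ∑ j, c j * ⟪v j, β⟫ := Finset.single_le_sum
        (fun j _ => mul_nonneg (zero_le_one.trans (hc j)) (hβ j)) (Finset.mem_univ j₀)
    _ = ⟪∑ j, c j • v j, β⟫ := by simp only [sum_inner, real_inner_smul_left]

theorem not_exists_ne_zero_inner_nonneg_iff [FiniteDimensional ℝ E]
    (hv : ∀ β, (∀ j, ⟪v j, β⟫ = 0) → β = 0) :
    (¬ ∃ β ≠ 0, ∀ j, 0 ≤ ⟪v j, β⟫) ↔ ∃ c : ι → ℝ, (∀ j, 1 ≤ c j) ∧ ∑ j, c j • v j = 0 := by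
  constructor
  · intro h
    push Not at h
    obtain ⟨c, hc, hsum⟩ := exists_pos_sum_smul_eq_zero_of_forall_exists_inner_neg v h
    -- rescale by `∑ j, (c j)⁻¹`, which dominates every `(c j)⁻¹`
    refine ⟨fun j => (∑ k, (c k)⁻¹) * c j, fun j => ?_, ?_⟩
    · rw [← inv_mul_cancel₀ (hc j).ne']
      exact mul_le_mul_of_nonneg_right
        (Finset.single_le_sum (fun k _ => (inv_pos.mpr (hc k)).le) (Finset.mem_univ j)) (hc j).le
    · simp only [mul_smul, ← Finset.smul_sum, hsum, smul_zero]
  · rintro ⟨c, hc, hsum⟩ ⟨β, hβ0, hβ⟩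
    refine hβ0 (hv β fun j => le_antisymm ?_ (hβ j))
    simpa [hsum] using inner_le_inner_sum_smul v hc hβ j

theorem sInf_norm_sq_sum_smul_eq_zero_iff [FiniteDimensional ℝ E]
    (hv : ∀ β, (∀ j, ⟪v j, β⟫ = 0) → β = 0) :
    sInf {r : ℝ | ∃ c : ι → ℝ, (∀ j, 1 ≤ c j) ∧ r = ‖∑ j, c j • v j‖ ^ 2} = 0 ↔
      ∃ c : ι → ℝ, (∀ j, 1 ≤ c j) ∧ ∑ j, c j • v j = 0 := by
  set S := {r : ℝ | ∃ c : ι → ℝ, (∀ j, 1 ≤ c j) ∧ r = ‖∑ j, c j • v j‖ ^ 2}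
  have hS_nonneg : 0 ∈ lowerBounds S := by
    rintro r ⟨c, -, rfl⟩
    positivity
  constructor
  · intro hS
    by_contra hc
    obtain ⟨β, hβ0, hβ⟩ := not_not.mp (mt (not_exists_ne_zero_inner_nonneg_iff v hv).mp hc)
    obtain ⟨j₀, hj₀⟩ : ∃ j₀, ⟪v j₀, β⟫ ≠ 0 := by
      by_contra! hall
      exact hβ0 (hv β hall)
    have hβn : 0 < ‖β‖ := norm_pos_iff.mpr hβ0
    have hbound : (⟪v j₀, β⟫ / ‖β‖) ^ 2 ∈ lowerBounds S := by
      rintro r ⟨c, hc, rfl⟩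
      refine pow_le_pow_left₀ (div_nonneg (hβ j₀) hβn.le) ?_ 2
      rw [div_le_iff₀ hβn]
      exact (inner_le_inner_sum_smul v hc hβ j₀).trans (real_inner_le_norm _ _)
    have := le_csInf (⟨_, fun _ => 1, fun _ => le_rfl, rfl⟩ : S.Nonempty) hbound
    rw [hS] at this
    exact hj₀ (by simpa [hβ0] using this)
  · rintro ⟨c, hc, hsum⟩
    exact IsLeast.csInf_eq ⟨⟨c, hc, by simp [hsum]⟩, hS_nonneg⟩

end Alternative

section Model

variable {n T p : ℕ} (X : Fin n → Fin T → EuclideanSpace ℝ (Fin p)) (Y : Fin n → Fin T → Bool)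

def linIndex (i : Fin n) (d : Fin T → Bool) (β : EuclideanSpace ℝ (Fin p)) : ℝ :=
  ∑ t, bval (d t) * ⟪X i t, β⟫

theorem inner_vvec (i : Fin n) (d : Fin T → Bool) (β : EuclideanSpace ℝ (Fin p)) :
    ⟪vvec X Y i d, β⟫ = linIndex X i d β - linIndex X i (Y i) β := by
  simp only [vvec, linIndex, sum_inner, real_inner_smul_left, sub_mul, Finset.sum_sub_distrib]

theorem sum_cweight (i : Fin n) (β : EuclideanSpace ℝ (Fin p)) :
    ∑ e ∈ altSet T (Y i), cweight X Y i e β = 1 := by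
  simp only [cweight]
  rw [← Finset.sum_div, div_self]
  exact (Finset.sum_pos (fun f _ => Real.exp_pos _) ⟨Y i, by simp [altSet]⟩).ne'

theorem rowMat_mulVec (β' β : EuclideanSpace ℝ (Fin p)) (i : Fin n) (d : Fin T → Bool)
    (hd : d ∈ altSet T (Y i)) :
    (rowMat X Y β').mulVec (WithLp.ofLp β) ⟨i, d, hd⟩ =
      linIndex X i d β - ∑ e ∈ altSet T (Y i), cweight X Y i e β' * linIndex X i e β := by
  have hcoord : ∀ e, linIndex X i e β = ∑ k, (∑ t, bval (e t) * X i t k) * β k := fun e => by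
    simp only [linIndex, PiLp.inner_apply, RCLike.inner_apply, conj_trivial, Finset.mul_sum,
      Finset.sum_mul]
    rw [Finset.sum_comm]
    exact Finset.sum_congr rfl fun _ _ => Finset.sum_congr rfl fun _ _ => by ring
  simp only [Matrix.mulVec, dotProduct, rowMat, hcoord, sub_mul, Finset.sum_sub_distrib,
    Finset.sum_mul, Finset.mul_sum]
  congr 1
  rw [Finset.sum_comm]
  simp only [mul_assoc]

theorem eq_zero_of_forall_inner_vvec_eq_zero (h1 : Assumption1 X Y)
    (β : EuclideanSpace ℝ (Fin p)) (hβ : ∀ j : RowIdx n T Y, ⟪vvec X Y j.1 j.2.1, β⟫ = 0) :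
    β = 0 := by
  have hinj : Function.Injective (rowMat X Y 0).mulVec := by
    rw [Matrix.mulVec_injective_iff, linearIndependent_iff_card_eq_finrank_span, Set.finrank,
      ← Matrix.rank_eq_finrank_span_cols, h1, Fintype.card_fin]
  have hindex : ∀ i, ∀ e ∈ altSet T (Y i), linIndex X i e β = linIndex X i (Y i) β :=
    fun i e he => sub_eq_zero.mp ((inner_vvec X Y i e β).symm.trans (hβ ⟨i, e, he⟩))
  refine (WithLp.ofLp_injective 2).eq_iff.mp (hinj ?_)
  ext ⟨i, d, hd⟩
  rw [rowMat_mulVec, Finset.sum_congr rfl fun e he => by rw [hindex i e he], ← Finset.sum_mul,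
    sum_cweight, hindex i d hd]
  simp

theorem assumption2_iff_not_exists_inner_vvec_nonneg :
    Assumption2 X Y ↔ ¬ ∃ β ≠ 0, ∀ j : RowIdx n T Y, 0 ≤ ⟪vvec X Y j.1 j.2.1, β⟫ := by
  simp only [Assumption2, inner_vvec, linIndex, ← Finset.sum_sub_distrib, ← sub_mul,
    Sigma.forall, Subtype.forall]

end Model

theorem stmt3_general {n T p : ℕ}
    (X : Fin n → Fin T → EuclideanSpace ℝ (Fin p)) (Y : Fin n → Fin T → Bool)
    (h1 : Assumption1 X Y) :
    (Assumption2 X Y ↔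
      sInf {r : ℝ | ∃ c : RowIdx n T Y → ℝ, (∀ j, 1 ≤ c j) ∧
        r = ‖∑ j : RowIdx n T Y, c j • vvec X Y j.1 j.2.1‖ ^ 2} = 0) ∧
    (Assumption2 X Y ↔
      ∃ c : RowIdx n T Y → ℝ, (∀ j, 1 ≤ c j) ∧
        ∑ j : RowIdx n T Y, c j • vvec X Y j.1 j.2.1 = 0) := by
  have hv := eq_zero_of_forall_inner_vvec_eq_zero X Y h1
  have h2 : Assumption2 X Y ↔ ∃ c : RowIdx n T Y → ℝ, (∀ j, 1 ≤ c j) ∧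
      ∑ j : RowIdx n T Y, c j • vvec X Y j.1 j.2.1 = 0 :=
    (assumption2_iff_not_exists_inner_vvec_nonneg X Y).trans
      (not_exists_ne_zero_inner_nonneg_iff _ hv)
  exact ⟨h2.trans (sInf_norm_sq_sum_smul_eq_zero_iff _ hv).symm, h2⟩

/-- Theorem 2: under full rank, no separation holds iff the minimum of the quadratic
program is zero, equivalently iff some coefficients `c_{i,d} ≥ 1` make `∑ c_{i,d} v_{i,d} = 0`. -/
theorem stmt3 {n T p : ℕ} (hn : 1 ≤ n) (hT : 1 ≤ T) (hp : 1 ≤ p)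
    (X : Fin n → Fin T → EuclideanSpace ℝ (Fin p)) (Y : Fin n → Fin T → Bool)
    (h1 : Assumption1 X Y) :
    (Assumption2 X Y ↔
      sInf {r : ℝ | ∃ c : RowIdx n T Y → ℝ, (∀ j, 1 ≤ c j) ∧
        r = ‖∑ j : RowIdx n T Y, c j • vvec X Y j.1 j.2.1‖ ^ 2} = 0) ∧
    (Assumption2 X Y ↔
      ∃ c : RowIdx n T Y → ℝ, (∀ j, 1 ≤ c j) ∧
        ∑ j : RowIdx n T Y, c j • vvec X Y j.1 j.2.1 = 0) :=
  stmt3_general X Y h1
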